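/- (Spectrum of the next-generation matrix for the demographic model.) Let n ≥ 1, let A be an n×n real sub-generator matrix, α ∈ ℝⁿ a probability vector, μ, γ_V, γ_R, ρ_J, μ_J > 0, and φ_J, φ_V ≥ 0 with φ_J < ρ_J + μ_J. On the (n+3)-element index set {J} ⊕ {1,…,n} ⊕ {V} ⊕ {R}, define the block matrices F (whose only nonzero block is the B-rows × J-column block ρ_J·α) and 𝕍 with block rows [(ρ_J+μ_J)−φ_J, 0, −φ_V, 0], [0, μI−Aᵀ, 0, −γ_R·α], [0, (A𝟙)ᵀ, μ+γ_V, 0], [0, 0, −γ_V, μ+γ_R]. Then 𝕍 is invertible and the characteristic polynomial of F·𝕍⁻¹ equals Xⁿ⁺² · (X − N₀), where N₀ = (ρ_J/((ρ_J+μ_J)−φ_J)) · (φ_V/(μ+γ_V)) · τ · n_G is the basic offspring number; in particular the spectral radius of the next-generation matrix F·𝕍⁻¹ equals N₀. -/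

import Mathlib

open Matrix Polynomial

/-- Index set of the demographic model: juveniles `J`, biting stages `B₁,…,Bₙ`,
ovipositing `V`, resting `R`. -/
abbrev DemogIdx (n : ℕ) := Fin 1 ⊕ (Fin n ⊕ (Fin 1 ⊕ Fin 1))

/-- The new-recruitment matrix `F`: its only nonzero block is the `B`-rows ×
`J`-column block `ρ_J · α`. -/
def Fmat {n : ℕ} (α : Fin n → ℝ) (ρJ : ℝ) : Matrix (DemogIdx n) (DemogIdx n) ℝ :=
  Matrix.of fun i j =>
    match i, j with
    | Sum.inr (Sum.inl k), Sum.inl _ => ρJ * α k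
    | _, _ => 0

/-- The net-transition matrix `𝕍` with block rows
`[(ρ_J+μ_J)−φ_J, 0, −φ_V, 0]`, `[0, μI−Aᵀ, 0, −γ_R α]`, `[0, (A𝟙)ᵀ, μ+γ_V, 0]`,
`[0, 0, −γ_V, μ+γ_R]`. -/
def Vmat {n : ℕ} (A : Matrix (Fin n) (Fin n) ℝ) (α : Fin n → ℝ)
    (μ γV γR ρJ μJ φJ φV : ℝ) : Matrix (DemogIdx n) (DemogIdx n) ℝ :=
  Matrix.of fun i j =>
    match i, j with
    | Sum.inl _, Sum.inl _ => (ρJ + μJ) - φJ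
    | Sum.inl _, Sum.inr (Sum.inr (Sum.inl _)) => -φV
    | Sum.inr (Sum.inl k), Sum.inr (Sum.inl l) =>
        (μ • (1 : Matrix (Fin n) (Fin n) ℝ) - Aᵀ) k l
    | Sum.inr (Sum.inl k), Sum.inr (Sum.inr (Sum.inr _)) => -(γR * α k)
    | Sum.inr (Sum.inr (Sum.inl _)), Sum.inr (Sum.inl l) => (A *ᵥ (1 : Fin n → ℝ)) l
    | Sum.inr (Sum.inr (Sum.inl _)), Sum.inr (Sum.inr (Sum.inl _)) => μ + γV
    | Sum.inr (Sum.inr (Sum.inr _)), Sum.inr (Sum.inr (Sum.inl _)) => -γV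
    | Sum.inr (Sum.inr (Sum.inr _)), Sum.inr (Sum.inr (Sum.inr _)) => μ + γR
    | _, _ => 0

/-- The survival-and-exit probability `τ = αᵀ (μI − A)⁻¹ ((−A)𝟙)`. -/
noncomputable def tau {n : ℕ} (A : Matrix (Fin n) (Fin n) ℝ) (α : Fin n → ℝ) (μ : ℝ) : ℝ :=
  α ⬝ᵥ ((μ • (1 : Matrix (Fin n) (Fin n) ℝ) - A)⁻¹ *ᵥ ((-A) *ᵥ (1 : Fin n → ℝ)))

/-- The average number of gonotrophic cycles `n_G`. -/
noncomputable def nG {n : ℕ} (A : Matrix (Fin n) (Fin n) ℝ) (α : Fin n → ℝ)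
    (μ γV γR : ℝ) : ℝ :=
  (1 - tau A α μ * (γR / (μ + γR)) * (γV / (μ + γV)))⁻¹

/-! The recruitment matrix has rank one, `F = c e_Jᵀ`, so `F 𝕍⁻¹ = c (e_Jᵀ 𝕍⁻¹)` has
characteristic polynomial `X ^ (n + 2) * (X - c ⬝ᵥ x)` with `x` the `J`-row of `𝕍⁻¹`. That row is
found by solving `x 𝕍 = e_Jᵀ` block by block: the biting block gives `(μI - A) x_B = x_V (-A) 𝟙`,
leaving a `2 × 2` system for `x_V, x_R` with determinant `(μ + γV) (μ + γR) - γV γR τ`, positive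
since `τ ≤ 1`; the same elimination with right-hand side `0` shows that `𝕍` is invertible.
Invertibility of `μI - A` and `0 ≤ τ ≤ 1` both come from the weak maximum principle for a
sub-generator `A`: `(μI - A) z ≥ 0` implies `z ≥ 0`. -/

section SubGenerator

variable {ι : Type*} [Fintype ι] [DecidableEq ι] {A : Matrix ι ι ℝ} {μ : ℝ}

theorem smul_one_sub_mulVec (z : ι → ℝ) :
    (μ • (1 : Matrix ι ι ℝ) - A) *ᵥ z = μ • z - A *ᵥ z := by
  rw [sub_mulVec, smul_mulVec, one_mulVec]

theorem nonneg_of_nonneg_smul_one_sub_mulVec (hoff : ∀ i j, i ≠ j → 0 ≤ A i j)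
    (hrow : ∀ i, ∑ j, A i j ≤ 0) (hμ : 0 < μ) {z : ι → ℝ}
    (hz : 0 ≤ (μ • (1 : Matrix ι ι ℝ) - A) *ᵥ z) : 0 ≤ z := by
  by_contra hneg
  obtain ⟨j, hj⟩ : ∃ j, z j < 0 := by simpa [Pi.le_def] using hneg
  obtain ⟨i, -, hi⟩ := Finset.exists_min_image Finset.univ z ⟨j, Finset.mem_univ j⟩
  have hzi : z i < 0 := (hi j (Finset.mem_univ j)).trans_lt hj
  have hmin : (∑ k, A i k) * z i ≤ ∑ k, A i k * z k := by
    rw [Finset.sum_mul]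
    refine Finset.sum_le_sum fun k _ => ?_
    rcases eq_or_ne i k with rfl | hik
    · rfl
    · exact mul_le_mul_of_nonneg_left (hi k (Finset.mem_univ k)) (hoff i k hik)
  have hzi' : 0 ≤ μ * z i - ∑ k, A i k * z k := by
    have h := hz i
    rw [smul_one_sub_mulVec] at h
    exact h
  nlinarith [mul_nonneg_of_nonpos_of_nonpos (hrow i) hzi.le]

theorem isUnit_smul_one_sub (hoff : ∀ i j, i ≠ j → 0 ≤ A i j)
    (hrow : ∀ i, ∑ j, A i j ≤ 0) (hμ : 0 < μ) : IsUnit (μ • (1 : Matrix ι ι ℝ) - A) := by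
  rw [← mulVec_injective_iff_isUnit]
  have hle : ∀ u w, (μ • (1 : Matrix ι ι ℝ) - A) *ᵥ u = (μ • 1 - A) *ᵥ w → w ≤ u :=
    fun u w huw => sub_nonneg.1 <|
      nonneg_of_nonneg_smul_one_sub_mulVec hoff hrow hμ (by rw [mulVec_sub, huw, sub_self])
  exact fun u w huw => le_antisymm (hle w u huw.symm) (hle u w huw)

/-- For a sub-generator `A`, the probability of leaving the transient states through the exit
rates `(-A) 𝟙` before being killed at rate `μ`, as a function of the initial state. -/
noncomputable def exitVec (A : Matrix ι ι ℝ) (μ : ℝ) : ι → ℝ :=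
  (μ • (1 : Matrix ι ι ℝ) - A)⁻¹ *ᵥ ((-A) *ᵥ 1)

theorem smul_one_sub_mulVec_exitVec (hM : IsUnit (μ • (1 : Matrix ι ι ℝ) - A)) :
    (μ • (1 : Matrix ι ι ℝ) - A) *ᵥ exitVec A μ = (-A) *ᵥ 1 := by
  rw [exitVec, mulVec_mulVec, mul_nonsing_inv _ ((isUnit_iff_isUnit_det _).1 hM), one_mulVec]

theorem exitVec_nonneg (hoff : ∀ i j, i ≠ j → 0 ≤ A i j)
    (hrow : ∀ i, ∑ j, A i j ≤ 0) (hμ : 0 < μ) : 0 ≤ exitVec A μ := by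
  refine nonneg_of_nonneg_smul_one_sub_mulVec hoff hrow hμ ?_
  rw [smul_one_sub_mulVec_exitVec (isUnit_smul_one_sub hoff hrow hμ)]
  intro i
  simpa [neg_mulVec, mulVec, dotProduct] using hrow i

theorem exitVec_le_one (hoff : ∀ i j, i ≠ j → 0 ≤ A i j)
    (hrow : ∀ i, ∑ j, A i j ≤ 0) (hμ : 0 < μ) : exitVec A μ ≤ 1 := by
  rw [← sub_nonneg]
  refine nonneg_of_nonneg_smul_one_sub_mulVec hoff hrow hμ ?_
  rw [mulVec_sub, smul_one_sub_mulVec_exitVec (isUnit_smul_one_sub hoff hrow hμ)]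
  intro i
  simp [smul_one_sub_mulVec, neg_mulVec, hμ.le]

end SubGenerator

theorem tau_eq_dotProduct_exitVec {n : ℕ} (A : Matrix (Fin n) (Fin n) ℝ) (α : Fin n → ℝ) (μ : ℝ) :
    tau A α μ = α ⬝ᵥ exitVec A μ :=
  rfl

theorem tau_nonneg {n : ℕ} {A : Matrix (Fin n) (Fin n) ℝ} {α : Fin n → ℝ} {μ : ℝ}
    (hoff : ∀ i j, i ≠ j → 0 ≤ A i j) (hrow : ∀ i, ∑ j, A i j ≤ 0) (hμ : 0 < μ)
    (hα0 : ∀ i, 0 ≤ α i) : 0 ≤ tau A α μ := by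
  rw [tau_eq_dotProduct_exitVec]
  exact Finset.sum_nonneg fun i _ => mul_nonneg (hα0 i) (exitVec_nonneg hoff hrow hμ i)

theorem tau_le_one {n : ℕ} {A : Matrix (Fin n) (Fin n) ℝ} {α : Fin n → ℝ} {μ : ℝ}
    (hoff : ∀ i j, i ≠ j → 0 ≤ A i j) (hrow : ∀ i, ∑ j, A i j ≤ 0) (hμ : 0 < μ)
    (hα0 : ∀ i, 0 ≤ α i) (hα1 : ∑ i, α i = 1) : tau A α μ ≤ 1 := by
  rw [tau_eq_dotProduct_exitVec, ← hα1]
  exact Finset.sum_le_sum fun i _ => mul_le_of_le_one_right (hα0 i) (exitVec_le_one hoff hrow hμ i)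

theorem Matrix.charpoly_vecMulVec_eq_X_pow_mul {m R : Type*} [Fintype m] [DecidableEq m]
    [Nonempty m] [CommRing R] (u v : m → R) :
    (vecMulVec u v).charpoly = X ^ (Fintype.card m - 1) * (X - C (u ⬝ᵥ v)) := by
  rw [charpoly_vecMulVec, mul_sub, ← pow_succ, Nat.sub_add_cancel Fintype.card_pos,
    smul_eq_C_mul, mul_comm (X ^ _)]

theorem Matrix.spectralRadius_eq_enorm_of_charpoly_eq {m K : Type*} [Fintype m] [DecidableEq m]
    [NormedField K] {B : Matrix m m K} {k : ℕ} {r : K} (h : B.charpoly = X ^ k * (X - C r)) :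
    spectralRadius K B = ‖r‖ₑ := by
  have hroot : ∀ s, s ∈ spectrum K B ↔ s ^ k = 0 ∨ s = r := by
    intro s
    simp [mem_spectrum_iff_isRoot_charpoly, h, sub_eq_zero]
  refine le_antisymm (iSup₂_le fun s hs => ?_)
    (le_iSup₂ (f := fun s _ => (‖s‖₊ : ENNReal)) r ((hroot r).2 (Or.inr rfl)))
  rcases (hroot s).1 hs with h0 | rfl
  · simp [eq_zero_of_pow_eq_zero h0]
  · rfl

section Demographic

variable {n : ℕ} {A : Matrix (Fin n) (Fin n) ℝ} {α : Fin n → ℝ} {μ γV γR ρJ μJ φJ φV : ℝ}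

/-- The determinant of the linear system for the `V` and `R` compartments once the biting block
has been eliminated. -/
noncomputable def cycleDet (A : Matrix (Fin n) (Fin n) ℝ) (α : Fin n → ℝ) (μ γV γR : ℝ) : ℝ :=
  (μ + γV) * (μ + γR) - γV * γR * tau A α μ

theorem cycleDet_pos (hμ : 0 < μ) (hγV : 0 < γV) (hγR : 0 < γR) (hτ : tau A α μ ≤ 1) :
    0 < cycleDet A α μ γV γR := by
  unfold cycleDet
  nlinarith [mul_pos hγV hγR, mul_pos hμ hγR, mul_pos hμ hγV, mul_pos hμ hμ]

theorem nG_eq_div_cycleDet (hγV : μ + γV ≠ 0) (hγR : μ + γR ≠ 0) :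
    nG A α μ γV γR = (μ + γV) * (μ + γR) / cycleDet A α μ γV γR := by
  rw [nG, cycleDet, ← inv_div]
  field_simp

def juvenileIndicator (n : ℕ) : DemogIdx n → ℝ := Sum.elim 1 0

def recruitVec (α : Fin n → ℝ) (ρJ : ℝ) : DemogIdx n → ℝ := Sum.elim 0 (Sum.elim (ρJ • α) 0)

theorem Fmat_eq_vecMulVec : Fmat α ρJ = vecMulVec (recruitVec α ρJ) (juvenileIndicator n) := by
  ext (i | k | i | i) (j | l | j | j) <;>
    simp [Fmat, recruitVec, juvenileIndicator, vecMulVec_apply]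

theorem vecMul_Vmat (xJ xV xR : ℝ) (xB : Fin n → ℝ) :
    Sum.elim (fun _ => xJ) (Sum.elim xB (Sum.elim (fun _ => xV) (fun _ => xR))) ᵥ*
        Vmat A α μ γV γR ρJ μJ φJ φV =
      Sum.elim (fun _ => (ρJ + μJ - φJ) * xJ)
        (Sum.elim ((μ • 1 - A) *ᵥ xB + xV • (A *ᵥ 1))
          (Sum.elim (fun _ => (μ + γV) * xV - φV * xJ - γV * xR)
            (fun _ => (μ + γR) * xR - γR * (α ⬝ᵥ xB)))) := by
  rw [← vecMul_transpose]
  ext (i | l | i | i) <;>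
    simp [vecMul, dotProduct, Fintype.sum_sum_type, Vmat, Finset.mul_sum, mul_comm,
      mul_left_comm] <;>
    ring

/-- The `J`-row of `𝕍⁻¹`. -/
noncomputable def ngmRow (A : Matrix (Fin n) (Fin n) ℝ) (α : Fin n → ℝ)
    (μ γV γR ρJ μJ φJ φV : ℝ) : DemogIdx n → ℝ :=
  let c := φV / ((ρJ + μJ - φJ) * cycleDet A α μ γV γR)
  Sum.elim (fun _ => (ρJ + μJ - φJ)⁻¹)
    (Sum.elim ((c * (μ + γR)) • exitVec A μ)
      (Sum.elim (fun _ => c * (μ + γR)) (fun _ => c * γR * tau A α μ)))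

theorem eq_smul_ngmRow_of_vecMul_Vmat (hM : IsUnit (μ • (1 : Matrix (Fin n) (Fin n) ℝ) - A))
    (hJ : ρJ + μJ - φJ ≠ 0) (hD : cycleDet A α μ γV γR ≠ 0) {x : DemogIdx n → ℝ} {s : ℝ}
    (hx : x ᵥ* Vmat A α μ γV γR ρJ μJ φJ φV = s • juvenileIndicator n) :
    x = s • ngmRow A α μ γV γR ρJ μJ φJ φV := by
  obtain ⟨xJ, xB, xV, xR, rfl⟩ : ∃ xJ xB xV xR,
      x = Sum.elim (fun _ => xJ) (Sum.elim xB (Sum.elim (fun _ => xV) (fun _ => xR))) :=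
    ⟨x (Sum.inl 0), fun k => x (Sum.inr (Sum.inl k)), x (Sum.inr (Sum.inr (Sum.inl 0))),
      x (Sum.inr (Sum.inr (Sum.inr 0))), by ext (i | k | i | i) <;> simp [Fin.fin_one_eq_zero]⟩
  rw [vecMul_Vmat] at hx
  have colJ : (ρJ + μJ - φJ) * xJ = s := by simpa [juvenileIndicator] using congrFun hx (Sum.inl 0)
  have colB : (μ • 1 - A) *ᵥ xB = (μ • 1 - A) *ᵥ (xV • exitVec A μ) := by
    rw [mulVec_smul, smul_one_sub_mulVec_exitVec hM, neg_mulVec, smul_neg, eq_neg_iff_add_eq_zero]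
    funext l
    simpa [juvenileIndicator] using congrFun hx (Sum.inr (Sum.inl l))
  have colV : (μ + γV) * xV - φV * xJ - γV * xR = 0 := by
    simpa [juvenileIndicator] using congrFun hx (Sum.inr (Sum.inr (Sum.inl 0)))
  have colR : (μ + γR) * xR - γR * (α ⬝ᵥ xB) = 0 := by
    simpa [juvenileIndicator] using congrFun hx (Sum.inr (Sum.inr (Sum.inr 0)))
  have hxB : xB = xV • exitVec A μ := mulVec_injective_iff_isUnit.2 hM colB
  rw [hxB, dotProduct_smul, smul_eq_mul] at colR
  change (μ + γR) * xR - γR * (xV * tau A α μ) = 0 at colR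
  have hxJ : xJ = s * (ρJ + μJ - φJ)⁻¹ := by
    field_simp
    linarith
  have hxV : xV = s * (φV / ((ρJ + μJ - φJ) * cycleDet A α μ γV γR) * (μ + γR)) := by
    field_simp
    unfold cycleDet
    linear_combination (ρJ + μJ - φJ) * ((μ + γR) * colV + γV * colR) + (μ + γR) * φV * colJ
  have hxR : xR = s * (φV / ((ρJ + μJ - φJ) * cycleDet A α μ γV γR) * γR * tau A α μ) := by
    field_simp
    unfold cycleDet
    linear_combination (ρJ + μJ - φJ) * (γR * tau A α μ * colV + (μ + γV) * colR) +
      γR * tau A α μ * φV * colJ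
  ext (i | k | i | i) <;> simp [ngmRow, hxJ, hxB, hxV, hxR]
  ring

theorem isUnit_Vmat (hM : IsUnit (μ • (1 : Matrix (Fin n) (Fin n) ℝ) - A))
    (hJ : ρJ + μJ - φJ ≠ 0) (hD : cycleDet A α μ γV γR ≠ 0) :
    IsUnit (Vmat A α μ γV γR ρJ μJ φJ φV) := by
  rw [← vecMul_injective_iff_isUnit]
  intro u w (huw : u ᵥ* _ = w ᵥ* _)
  have h := eq_smul_ngmRow_of_vecMul_Vmat hM hJ hD (x := u - w) (s := 0)
    (by rw [sub_vecMul, huw, sub_self, zero_smul])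
  rwa [zero_smul, sub_eq_zero] at h

theorem Fmat_mul_inv_Vmat (hM : IsUnit (μ • (1 : Matrix (Fin n) (Fin n) ℝ) - A))
    (hJ : ρJ + μJ - φJ ≠ 0) (hD : cycleDet A α μ γV γR ≠ 0) :
    Fmat α ρJ * (Vmat A α μ γV γR ρJ μJ φJ φV)⁻¹ =
      vecMulVec (recruitVec α ρJ) (ngmRow A α μ γV γR ρJ μJ φJ φV) := by
  have hV := (isUnit_iff_isUnit_det _).1 (isUnit_Vmat (φV := φV) hM hJ hD)
  have hrow := eq_smul_ngmRow_of_vecMul_Vmat hM hJ hD (s := 1)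
    (x := juvenileIndicator n ᵥ* (Vmat A α μ γV γR ρJ μJ φJ φV)⁻¹)
    (by rw [vecMul_vecMul, nonsing_inv_mul _ hV, vecMul_one, one_smul])
  rw [Fmat_eq_vecMulVec, vecMulVec_mul, hrow, one_smul]

theorem recruitVec_dotProduct_ngmRow (hγV : μ + γV ≠ 0) (hγR : μ + γR ≠ 0) :
    recruitVec α ρJ ⬝ᵥ ngmRow A α μ γV γR ρJ μJ φJ φV =
      ρJ / (ρJ + μJ - φJ) * (φV / (μ + γV)) * tau A α μ * nG A α μ γV γR := by
  simp only [recruitVec, ngmRow, sumElim_dotProduct_sumElim, zero_dotProduct, zero_add, add_zero,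
    smul_dotProduct, dotProduct_smul, smul_eq_mul, ← tau_eq_dotProduct_exitVec,
    nG_eq_div_cycleDet hγV hγR]
  field_simp

end Demographic

theorem ngm_demographic_charpoly_and_spectralRadius
    (n : ℕ) (A : Matrix (Fin n) (Fin n) ℝ)
    (hoff : ∀ i j, i ≠ j → 0 ≤ A i j)
    (hrow : ∀ i, ∑ j, A i j ≤ 0)
    (α : Fin n → ℝ) (hα0 : ∀ i, 0 ≤ α i) (hα1 : ∑ i, α i = 1)
    (μ γV γR ρJ μJ φJ φV : ℝ)
    (hμ : 0 < μ) (hγV : 0 < γV) (hγR : 0 < γR) (hρJ : 0 < ρJ)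
    (hφV : 0 ≤ φV) (hφJ' : φJ < ρJ + μJ) :
    IsUnit (Vmat A α μ γV γR ρJ μJ φJ φV) ∧
    (Fmat α ρJ * (Vmat A α μ γV γR ρJ μJ φJ φV)⁻¹).charpoly =
      Polynomial.X ^ (n + 2) *
        (Polynomial.X -
          Polynomial.C ((ρJ / ((ρJ + μJ) - φJ)) * (φV / (μ + γV)) *
            tau A α μ * nG A α μ γV γR)) ∧
    spectralRadius ℝ (Fmat α ρJ * (Vmat A α μ γV γR ρJ μJ φJ φV)⁻¹) =
      ENNReal.ofReal ((ρJ / ((ρJ + μJ) - φJ)) * (φV / (μ + γV)) *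
        tau A α μ * nG A α μ γV γR) := by
  have hM := isUnit_smul_one_sub hoff hrow hμ
  have hJ : 0 < ρJ + μJ - φJ := by linarith
  have hD := cycleDet_pos hμ hγV hγR (tau_le_one hoff hrow hμ hα0 hα1)
  have hnG : 0 ≤ nG A α μ γV γR := by
    rw [nG_eq_div_cycleDet (by positivity) (by positivity)]
    positivity
  have hN₀ : 0 ≤ ρJ / (ρJ + μJ - φJ) * (φV / (μ + γV)) * tau A α μ * nG A α μ γV γR := by
    have := tau_nonneg hoff hrow hμ hα0
    positivity
  have hchar : (Fmat α ρJ * (Vmat A α μ γV γR ρJ μJ φJ φV)⁻¹).charpoly =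
      X ^ (n + 2) * (X - C (ρJ / (ρJ + μJ - φJ) * (φV / (μ + γV)) * tau A α μ *
        nG A α μ γV γR)) := by
    rw [Fmat_mul_inv_Vmat hM hJ.ne' hD.ne', charpoly_vecMulVec_eq_X_pow_mul,
      recruitVec_dotProduct_ngmRow (by positivity) (by positivity)]
    simp [Fintype.card_sum]
  refine ⟨isUnit_Vmat hM hJ.ne' hD.ne', hchar, ?_⟩
  rw [spectralRadius_eq_enorm_of_charpoly_eq hchar, Real.enorm_eq_ofReal hN₀]
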